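/- arXiv:1210.3917 — 4 statements merged into one kernel-verified Lean document; each statement's English description precedes it below -/
import Mathlib

section
/- Let P be a probability measure on (T, B(T)). Assume that for every window W', every D ∈ B(T_{W'}) and every ε > 0 there exists a window Ŵ (depending on W', D, ε) such that W' is contained in the interior of Ŵ and |P(D ∩ E) − P(D)P(E)| < ε for every E ∈ B(T_{Ŵ^c}). Then the tail σ-algebra B_{−∞}(T) is P-trivial, i.e. every E ∈ B_{−∞}(T) satisfies P(E) = 0 or P(E) = 1. -/
open MeasureTheory Set

noncomputable section

/-- Euclidean space `ℝ^ℓ`. -/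
abbrev V (ℓ : ℕ) := EuclideanSpace ℝ (Fin ℓ)

/-- The space of tessellations, identified with their boundaries: closed subsets of `ℝ^ℓ`. -/
def Tess (ℓ : ℕ) : Type := {F : Set (V ℓ) // IsClosed F}

/-- For `A ⊆ ℝ^ℓ`, the σ-algebra `B(T_A)` on the space of tessellations, generated by the
sets `{F : F ∩ C = ∅}` with `C` compact and `C ⊆ A`. -/
def tessSigma (ℓ : ℕ) (A : Set (V ℓ)) : MeasurableSpace (Tess ℓ) :=
  MeasurableSpace.generateFrom
    {s : Set (Tess ℓ) | ∃ C : Set (V ℓ), IsCompact C ∧ C ⊆ A ∧ s = {F : Tess ℓ | F.1 ∩ C = ∅}}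

/-- The σ-algebra `B(T)` (obtained for `A = univ`), as the ambient measurable structure. -/
instance (ℓ : ℕ) : MeasurableSpace (Tess ℓ) := tessSigma ℓ Set.univ

/-- A window: a compact convex polytope with nonempty interior. -/
def IsWindow (ℓ : ℕ) (W : Set (V ℓ)) : Prop :=
  (∃ S : Finset (V ℓ), W = convexHull ℝ (S : Set (V ℓ))) ∧ (interior W).Nonempty

/-- The cube `[-n, n]^ℓ`. -/
def cube (ℓ n : ℕ) : Set (V ℓ) := {x | ∀ i, |x i| ≤ (n : ℝ)}

/-- The tail σ-algebra `B_{-∞}(T) = ⋂_{n ≥ 1} B(T_{W_n^c})` with `W_n = [-n,n]^ℓ`. -/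
def tailSigma (ℓ : ℕ) : MeasurableSpace (Tess ℓ) :=
  ⨅ n : ℕ, tessSigma ℓ (cube ℓ (n + 1))ᶜ

open ProbabilityTheory

/-! Since every window is compact, it lies in some cube `W_n`, so a tail event belongs to
`B(T_{Ŵᶜ})` for every window `Ŵ`; the mixing hypothesis then makes the tail event exactly
independent of each `D ∈ B(T_{W'})`. The sets `{F : F ∩ C = ∅}` with `C` compact form a π-system
generating `B(T)`, and each lies in `B(T_{W_n})` for a large cube, so the tail σ-algebra is
independent of `B(T)`, in particular of itself, and is therefore trivial. -/

lemma cube_eq_image_convexHull (ℓ n : ℕ) :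
    cube ℓ n = (EuclideanSpace.equiv (Fin ℓ) ℝ).symm.toLinearEquiv.toLinearMap ''
      convexHull ℝ (univ.pi fun _ => ({-(n : ℝ), (n : ℝ)} : Set ℝ)) := by
  rw [convexHull_pi]
  simp only [convexHull_pair, segment_eq_Icc (neg_le_self (Nat.cast_nonneg (α := ℝ) n))]
  ext x
  constructor
  · exact fun hx => ⟨EuclideanSpace.equiv (Fin ℓ) ℝ x, fun i _ => abs_le.mp (hx i), by simp⟩
  · rintro ⟨y, hy, rfl⟩ i
    exact abs_le.mpr (hy i (mem_univ i))

lemma isWindow_cube (ℓ : ℕ) {n : ℕ} (hn : 0 < n) : IsWindow ℓ (cube ℓ n) := by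
  refine ⟨?_, 0, ?_⟩
  · have hfin : (_ '' univ.pi fun _ : Fin ℓ => ({-(n : ℝ), (n : ℝ)} : Set ℝ)).Finite :=
      (Set.Finite.pi fun _ => (finite_singleton _).insert _).image
        (EuclideanSpace.equiv (Fin ℓ) ℝ).symm.toLinearEquiv.toLinearMap
    refine ⟨hfin.toFinset, ?_⟩
    rw [hfin.coe_toFinset, cube_eq_image_convexHull, LinearMap.image_convexHull]
  · have hball : Metric.ball (0 : V ℓ) 1 ⊆ cube ℓ n := fun x hx i =>
      calc |x i| ≤ ‖x‖ := PiLp.norm_apply_le x i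
        _ ≤ 1 := (mem_ball_zero_iff.mp hx).le
        _ ≤ n := by exact_mod_cast hn
    exact interior_maximal hball Metric.isOpen_ball (Metric.mem_ball_self one_pos)

lemma IsWindow.isCompact {ℓ : ℕ} {W : Set (V ℓ)} (hW : IsWindow ℓ W) : IsCompact W := by
  obtain ⟨⟨S, rfl⟩, -⟩ := hW
  exact S.finite_toSet.isCompact_convexHull ℝ

lemma IsCompact.exists_subset_cube {ℓ : ℕ} {K : Set (V ℓ)} (hK : IsCompact K) :
    ∃ n : ℕ, K ⊆ cube ℓ (n + 1) := by
  obtain ⟨R, hR⟩ := hK.isBounded.exists_norm_le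
  obtain ⟨n, hn⟩ := exists_nat_ge R
  refine ⟨n, fun x hx i => ?_⟩
  calc |x i| ≤ ‖x‖ := PiLp.norm_apply_le x i
    _ ≤ n := (hR x hx).trans hn
    _ ≤ (n + 1 : ℕ) := by exact_mod_cast n.le_succ

lemma tessSigma_mono (ℓ : ℕ) : Monotone (tessSigma ℓ) := by
  intro A B hAB
  apply MeasurableSpace.generateFrom_mono
  rintro s ⟨C, hC, hCA, rfl⟩
  exact ⟨C, hC, hCA.trans hAB, rfl⟩

lemma isPiSystem_tessSigma_generators (ℓ : ℕ) (A : Set (V ℓ)) :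
    IsPiSystem {s : Set (Tess ℓ) |
      ∃ C : Set (V ℓ), IsCompact C ∧ C ⊆ A ∧ s = {F : Tess ℓ | F.1 ∩ C = ∅}} := by
  rintro _ ⟨C₁, hC₁, hC₁A, rfl⟩ _ ⟨C₂, hC₂, hC₂A, rfl⟩ -
  refine ⟨C₁ ∪ C₂, hC₁.union hC₂, union_subset hC₁A hC₂A, ?_⟩
  ext F
  simp only [mem_inter_iff, mem_ofPred_eq, inter_union_distrib_left, union_empty_iff]

lemma tailSigma_le_tessSigma_compl {ℓ : ℕ} {K : Set (V ℓ)} (hK : IsCompact K) :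
    tailSigma ℓ ≤ tessSigma ℓ Kᶜ := by
  obtain ⟨n, hKn⟩ := hK.exists_subset_cube
  exact (iInf_le _ n).trans (tessSigma_mono ℓ (compl_subset_compl.mpr hKn))

lemma tailSigma_le (ℓ : ℕ) : tailSigma ℓ ≤ tessSigma ℓ univ :=
  (iInf_le _ 0).trans (tessSigma_mono ℓ (subset_univ _))

def IsMixing (ℓ : ℕ) (P : Measure (Tess ℓ)) : Prop :=
  ∀ W' : Set (V ℓ), IsWindow ℓ W' →
    ∀ D : Set (Tess ℓ), MeasurableSet[tessSigma ℓ W'] D →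
    ∀ ε : ℝ, 0 < ε →
    ∃ W : Set (V ℓ), IsWindow ℓ W ∧ W' ⊆ interior W ∧
      ∀ E : Set (Tess ℓ), MeasurableSet[tessSigma ℓ Wᶜ] E →
        |(P (D ∩ E)).toReal - (P D).toReal * (P E).toReal| < ε

lemma IsMixing.measure_inter_eq_mul {ℓ : ℕ} {P : Measure (Tess ℓ)} [IsFiniteMeasure P]
    (hP : IsMixing ℓ P) {W' : Set (V ℓ)} (hW' : IsWindow ℓ W') {D E : Set (Tess ℓ)}
    (hD : MeasurableSet[tessSigma ℓ W'] D) (hE : MeasurableSet[tailSigma ℓ] E) :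
    P (D ∩ E) = P D * P E := by
  have hreal : (P (D ∩ E)).toReal = (P D * P E).toReal := by
    rw [ENNReal.toReal_mul]
    refine eq_of_forall_dist_le fun ε hε => ?_
    obtain ⟨W, hW, -, hmix⟩ := hP W' hW' D hD ε hε
    exact (hmix E (tailSigma_le_tessSigma_compl hW.isCompact E hE)).le
  exact (ENNReal.toReal_eq_toReal_iff' (measure_ne_top _ _)
    (ENNReal.mul_ne_top (measure_ne_top _ _) (measure_ne_top _ _))).mp hreal

lemma IsMixing.indep_tailSigma {ℓ : ℕ} {P : Measure (Tess ℓ)} [IsProbabilityMeasure P]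
    (hP : IsMixing ℓ P) : Indep (tessSigma ℓ univ) (tailSigma ℓ) P := by
  refine IndepSets.indep le_rfl (tailSigma_le ℓ) (isPiSystem_tessSigma_generators ℓ univ)
    (@MeasurableSpace.isPiSystem_measurableSet _ (tailSigma ℓ)) rfl
    (@MeasurableSpace.generateFrom_measurableSet _ (tailSigma ℓ)).symm ?_
  rw [IndepSets_iff]
  rintro _ E ⟨C, hC, -, rfl⟩ hE
  obtain ⟨n, hCn⟩ := hC.exists_subset_cube
  exact hP.measure_inter_eq_mul (isWindow_cube ℓ n.succ_pos)
    (MeasurableSpace.measurableSet_generateFrom ⟨C, hC, hCn, rfl⟩) hE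

/-- Lemma 1 of the paper. If for every window `W'`, every
`D ∈ B(T_{W'})` and every `ε > 0` there is a window `Ŵ` with `W' ⊆ Int Ŵ` such that
`|P(D ∩ E) − P(D)P(E)| < ε` for all `E ∈ B(T_{Ŵᶜ})`, then the tail σ-algebra is `P`-trivial. -/
theorem stit_trivial_tail_criterion (ℓ : ℕ) (P : Measure (Tess ℓ)) [IsProbabilityMeasure P]
    (h : ∀ W' : Set (V ℓ), IsWindow ℓ W' →
      ∀ D : Set (Tess ℓ), MeasurableSet[tessSigma ℓ W'] D →
      ∀ ε : ℝ, 0 < ε →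
      ∃ W : Set (V ℓ), IsWindow ℓ W ∧ W' ⊆ interior W ∧
        ∀ E : Set (Tess ℓ), MeasurableSet[tessSigma ℓ Wᶜ] E →
          |(P (D ∩ E)).toReal - (P D).toReal * (P E).toReal| < ε) :
    ∀ E : Set (Tess ℓ), MeasurableSet[tailSigma ℓ] E → P E = 0 ∨ P E = 1 :=
  fun _ hE => measure_eq_zero_or_one_of_indep_self
    (indep_of_indep_of_le_left (IsMixing.indep_tailSigma h) (tailSigma_le ℓ)) hE
end
end

section
/- Let P be a translation invariant probability measure on (T, B(T)) such that the tail σ-algebra B_{−∞}(T) is P-trivial. Then the action of translations is mixing: for all D, E ∈ B(T), P(D ∩ (E + h)) → P(D)·P(E) as |h| → ∞. -/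
open MeasureTheory Set

noncomputable section

/-- Translation of a tessellation: `F + h = {x + h : x ∈ F}`. -/
def tessTranslate (ℓ : ℕ) (h : V ℓ) (F : Tess ℓ) : Tess ℓ :=
  ⟨(· + h) '' F.1, by simpa using (Homeomorph.addRight h).isClosedMap F.1 F.2⟩

/-!
Let `𝒢ₙ` be the σ-algebra of events outside the cube `[-(n+1), n+1]^ℓ`. The orthogonal
projections of `1_D` onto the decreasing subspaces `L²(𝒢ₙ)` converge to its projection onto
`⋂ₙ L²(𝒢ₙ)`, which by triviality of the tail is the constant `P(D)`. Testing against `1_A`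
gives `|P(D ∩ A) - P(D) P(A)| → 0` uniformly in `A ∈ 𝒢ₙ`. An event `E` is approximated by an
event `E'` seen in a bounded cube; for `|h|` large, `E' + h ∈ 𝒢ₙ`, and translation invariance
controls the error `P((E + h) ∆ (E' + h)) = P(E ∆ E')`.
-/

open Filter Topology
open scoped symmDiff

namespace Submodule

variable {𝕜 E : Type*} [RCLike 𝕜] [NormedAddCommGroup E] [InnerProductSpace 𝕜 E]

theorem starProjection_tendsto_iInf [CompleteSpace E] {ι : Type*} [Preorder ι]
    (U : ι → Submodule 𝕜 E) [∀ i, (U i).HasOrthogonalProjection]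
    [(⨅ i, U i).HasOrthogonalProjection] (hU : Antitone U) (x : E) :
    Tendsto (fun i => (U i).starProjection x) atTop (𝓝 ((⨅ i, U i).starProjection x)) := by
  have hclosure : (⨆ i, (U i)ᗮ).topologicalClosure = (⨅ i, U i)ᗮ := by
    rw [← orthogonal_orthogonal_eq_closure, ← iInf_orthogonal]
    simp only [orthogonal_orthogonal]
  have : (⨆ i, (U i)ᗮ).topologicalClosure.HasOrthogonalProjection := hclosure ▸ inferInstance
  have h := starProjection_tendsto_closure_iSup (fun i => (U i)ᗮ)
    (fun i j hij => orthogonal_le (hU hij)) x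
  have hcompl (K : Submodule 𝕜 E) [K.HasOrthogonalProjection] :
      K.starProjection x = x - Kᗮ.starProjection x := by
    rw [starProjection_orthogonal']
    simp
  simp only [hcompl (U _), hcompl (⨅ i, U i)]
  refine tendsto_const_nhds.sub ?_
  convert h using 3
  simp only [hclosure]

theorem abs_inner_sub_inner_le_mul_norm {F : Type*} [NormedAddCommGroup F]
    [InnerProductSpace ℝ F] {K : Submodule ℝ F} [K.HasOrthogonalProjection] {a : F} (ha : a ∈ K)
    (x y : F) : |inner ℝ a x - inner ℝ a y| ≤ ‖a‖ * ‖K.starProjection x - y‖ := by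
  have hax : inner ℝ a x = inner ℝ a (K.starProjection x) := by
    rw [← inner_starProjection_left_eq_right, starProjection_eq_self_iff.2 ha]
  rw [hax, ← inner_sub_right]
  exact abs_real_inner_le_norm _ _

end Submodule

namespace MeasureTheory

variable {Ω : Type*} {m0 : MeasurableSpace Ω} {μ : Measure Ω}

theorem AEStronglyMeasurable.iInf_of_antitone {m : ℕ → MeasurableSpace Ω} (hm : Antitone m)
    {f : Ω → ℝ} (hf : ∀ n, AEStronglyMeasurable[m n] f μ) :
    AEStronglyMeasurable[⨅ n, m n] f μ := by
  choose g hg hfg using hf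
  -- `limsup g` ignores finitely many `g n`, so it is `m k`-measurable for every `k`.
  have hmeas : Measurable[⨅ n, m n] fun x => limsup (fun n => g n x) atTop := by
    refine fun s hs => MeasurableSpace.measurableSet_iInf.2 fun k => ?_
    have hshift : (fun x => limsup (fun n => g n x) atTop)
        = fun x => limsup (fun n => g (n + k) x) atTop :=
      funext fun x => (limsup_nat_add _ k).symm
    rw [hshift]
    exact Measurable.limsup (δ := Ω) (mδ := m k)
      (fun n => (hg (n + k)).measurable.mono (hm (Nat.le_add_left k n)) le_rfl) hs
  refine ⟨_, hmeas.stronglyMeasurable, ?_⟩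
  filter_upwards [ae_all_iff.2 hfg] with x hx
  simp [← hx]

theorem exists_ae_eq_const_of_measure_zero_or_one [IsProbabilityMeasure μ]
    {m : MeasurableSpace Ω} (hm : m ≤ m0) (h01 : ∀ s, MeasurableSet[m] s → μ s = 0 ∨ μ s = 1)
    {f : Ω → ℝ} (hf : AEStronglyMeasurable[m] f μ) : ∃ c, f =ᵐ[μ] fun _ => c := by
  obtain ⟨g, hg, hfg⟩ := hf
  obtain ⟨c, hc⟩ := exists_eventuallyEq_const_of_forall_separating (l := ae μ) (f := g)
    MeasurableSet fun U hU => by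
      rcases h01 _ (hg.measurable hU) with h | h
      · exact Or.inr (measure_eq_zero_iff_ae_notMem.1 h)
      · exact Or.inl (mem_ae_iff.2 ((prob_compl_eq_zero_iff (hm _ (hg.measurable hU))).2 h))
  exact ⟨c, hfg.trans hc⟩

theorem hasOrthogonalProjection_iInf_lpMeas {m : ℕ → MeasurableSpace Ω} (hle : ∀ n, m n ≤ m0) :
    (⨅ n, lpMeas ℝ ℝ (m n) 2 μ).HasOrthogonalProjection := by
  have hclosed : IsClosed ((⨅ n, lpMeas ℝ ℝ (m n) 2 μ : Submodule ℝ (Lp ℝ 2 μ)) :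
      Set (Lp ℝ 2 μ)) := by
    rw [Submodule.coe_iInf]
    exact isClosed_iInter fun n => isClosed_aestronglyMeasurable (hle n)
  have := hclosed.completeSpace_coe
  infer_instance

theorem starProjection_iInf_lpMeas_indicatorConstLp_ae_eq [IsProbabilityMeasure μ]
    {m : ℕ → MeasurableSpace Ω} (hle : ∀ n, m n ≤ m0) (hm : Antitone m)
    (htriv : ∀ s, MeasurableSet[⨅ n, m n] s → μ s = 0 ∨ μ s = 1)
    [(⨅ n, lpMeas ℝ ℝ (m n) 2 μ).HasOrthogonalProjection] {D : Set Ω} (hD : MeasurableSet D) :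
    ((⨅ n, lpMeas ℝ ℝ (m n) 2 μ).starProjection
      (indicatorConstLp 2 hD (measure_ne_top μ D) (1 : ℝ)) : Ω → ℝ) =ᵐ[μ] fun _ => μ.real D := by
  set K := ⨅ n, lpMeas ℝ ℝ (m n) 2 μ
  set x := indicatorConstLp 2 hD (measure_ne_top μ D) (1 : ℝ)
  set one := indicatorConstLp 2 MeasurableSet.univ (measure_ne_top μ univ) (1 : ℝ)
  obtain ⟨c, hc⟩ := exists_ae_eq_const_of_measure_zero_or_one (iInf_le_of_le 0 (hle 0)) htriv
    (AEStronglyMeasurable.iInf_of_antitone hm fun n => mem_lpMeas_iff_aestronglyMeasurable.1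
      ((Submodule.mem_iInf _).1 (K.starProjection_apply_mem x) n))
  have hone : K.starProjection one = one := Submodule.starProjection_eq_self_iff.2
    ((Submodule.mem_iInf _).2 fun n => mem_lpMeas_indicatorConstLp (hle n) MeasurableSet.univ _)
  -- `c = ⟪1, P 1_D⟫ = ⟪P 1, 1_D⟫ = ⟪1, 1_D⟫ = P(D)`
  have hcD : c = μ.real D := by
    have h := Submodule.inner_starProjection_left_eq_right K one x
    rw [hone, L2.real_inner_indicatorConstLp_one_indicatorConstLp_one,
      L2.inner_indicatorConstLp_one, setIntegral_univ, integral_congr_ae hc] at h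
    simpa using h.symm
  exact hcD ▸ hc

theorem exists_forall_abs_measureReal_inter_sub_mul_le [IsProbabilityMeasure μ]
    {m : ℕ → MeasurableSpace Ω} (hle : ∀ n, m n ≤ m0) (hm : Antitone m)
    (htriv : ∀ s, MeasurableSet[⨅ n, m n] s → μ s = 0 ∨ μ s = 1)
    {D : Set Ω} (hD : MeasurableSet D) {ε : ℝ} (hε : 0 < ε) :
    ∃ n, ∀ A, MeasurableSet[m n] A → |μ.real (D ∩ A) - μ.real D * μ.real A| ≤ ε := by
  have (n : ℕ) : Fact (m n ≤ m0) := ⟨hle n⟩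
  have := hasOrthogonalProjection_iInf_lpMeas (μ := μ) hle
  have hK : Antitone fun n => lpMeas ℝ ℝ (m n) 2 μ := fun i j hij f hf =>
    mem_lpMeas_iff_aestronglyMeasurable.2
      ((mem_lpMeas_iff_aestronglyMeasurable.1 hf).mono (hm hij))
  set x := indicatorConstLp 2 hD (measure_ne_top μ D) (1 : ℝ)
  obtain ⟨n, hn⟩ := Metric.tendsto_atTop.1 (Submodule.starProjection_tendsto_iInf _ hK x) ε hε
  refine ⟨n, fun A hA => ?_⟩
  have key := Submodule.abs_inner_sub_inner_le_mul_norm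
    (mem_lpMeas_indicatorConstLp (hle n) hA (measure_ne_top μ A) (c := (1 : ℝ))) x
    ((⨅ n, lpMeas ℝ ℝ (m n) 2 μ).starProjection x)
  rw [L2.real_inner_indicatorConstLp_one_indicatorConstLp_one, L2.inner_indicatorConstLp_one,
    setIntegral_congr_ae (hle n A hA)
      ((starProjection_iInf_lpMeas_indicatorConstLp_ae_eq hle hm htriv hD).mono fun _ h _ => h),
    setIntegral_const, smul_eq_mul, inter_comm, mul_comm, ← dist_eq_norm] at key
  have ha : ‖indicatorConstLp 2 (hle n A hA) (measure_ne_top μ A) (1 : ℝ)‖ ≤ 1 := by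
    refine norm_indicatorConstLp_le.trans ?_
    simpa using Real.rpow_le_one measureReal_nonneg measureReal_le_one (by norm_num)
  exact (key.trans (mul_le_mul ha (hn n le_rfl).le dist_nonneg zero_le_one)).trans_eq (one_mul ε)

theorem isSetAlgebra_iUnion_measurableSet {m : ℕ → MeasurableSpace Ω} (hm : Monotone m) :
    IsSetAlgebra (⋃ n, {s | MeasurableSet[m n] s}) where
  empty_mem := mem_iUnion.2 ⟨0, @MeasurableSet.empty _ (m 0)⟩
  compl_mem := by
    simp only [mem_iUnion, mem_ofPred_eq]
    exact fun _ ⟨n, hs⟩ => ⟨n, hs.compl⟩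
  union_mem := by
    simp only [mem_iUnion, mem_ofPred_eq]
    rintro s t ⟨i, hs⟩ ⟨j, ht⟩
    exact ⟨max i j, (hm (le_max_left i j) _ hs).union (hm (le_max_right i j) _ ht)⟩

theorem exists_measurableSet_measureReal_symmDiff_lt [IsFiniteMeasure μ]
    {m : ℕ → MeasurableSpace Ω} (hm : Monotone m) (hgen : m0 = ⨆ n, m n)
    {s : Set Ω} (hs : MeasurableSet s) {ε : ℝ} (hε : 0 < ε) :
    ∃ n t, MeasurableSet[m n] t ∧ μ.real (s ∆ t) < ε := by
  rw [← MeasurableSpace.generateFrom_iUnion_measurableSet] at hgen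
  obtain ⟨t, ht, hst⟩ := (Measure.MeasureDense.of_generateFrom_isSetAlgebra_finite μ
    (isSetAlgebra_iUnion_measurableSet hm) hgen).approx s hs (measure_ne_top μ s) ε hε
  obtain ⟨n, htn⟩ := mem_iUnion.1 ht
  exact ⟨n, t, htn, ENNReal.toReal_lt_of_lt_ofReal hst⟩

theorem abs_measureReal_inter_sub_mul_le [IsProbabilityMeasure μ] {D S S' : Set Ω}
    (hD : MeasurableSet D) (hS : MeasurableSet S) (hS' : MeasurableSet S') :
    |μ.real (D ∩ S) - μ.real D * μ.real S|
      ≤ |μ.real (D ∩ S') - μ.real D * μ.real S'| + 2 * μ.real (S ∆ S') := by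
  have hinter : |μ.real (D ∩ S) - μ.real (D ∩ S')| ≤ μ.real (S ∆ S') :=
    (abs_measureReal_sub_le_measureReal_symmDiff (hD.inter hS).nullMeasurableSet
      (hD.inter hS').nullMeasurableSet).trans
      (by rw [← inter_symmDiff_distrib_left]; exact measureReal_mono inter_subset_right)
  have hmul : |μ.real D * (μ.real S' - μ.real S)| ≤ μ.real (S ∆ S') := by
    rw [abs_mul, abs_of_nonneg measureReal_nonneg, abs_sub_comm]
    exact mul_le_of_le_one_left (abs_nonneg _) measureReal_le_one |>.trans
      (abs_measureReal_sub_le_measureReal_symmDiff hS.nullMeasurableSet hS'.nullMeasurableSet)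
  calc |μ.real (D ∩ S) - μ.real D * μ.real S|
      = |(μ.real (D ∩ S) - μ.real (D ∩ S')) + (μ.real (D ∩ S') - μ.real D * μ.real S')
          + μ.real D * (μ.real S' - μ.real S)| := by ring_nf
    _ ≤ |μ.real (D ∩ S) - μ.real (D ∩ S')| + |μ.real (D ∩ S') - μ.real D * μ.real S'|
          + |μ.real D * (μ.real S' - μ.real S)| := abs_add_three _ _ _
    _ ≤ _ := by linarith

end MeasureTheory

section Tessellation

variable {ℓ : ℕ}

theorem tessSigma_mono_s7 {A B : Set (V ℓ)} (hAB : A ⊆ B) : tessSigma ℓ A ≤ tessSigma ℓ B :=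
  MeasurableSpace.generateFrom_mono fun _ ⟨C, hC, hCA, hs⟩ => ⟨C, hC, hCA.trans hAB, hs⟩

theorem leftInverse_tessTranslate_neg (h : V ℓ) :
    Function.LeftInverse (tessTranslate ℓ (-h)) (tessTranslate ℓ h) := fun F =>
  Subtype.ext (by simp [tessTranslate, preimage_preimage])

theorem tessTranslate_injective (h : V ℓ) : Function.Injective (tessTranslate ℓ h) :=
  (leftInverse_tessTranslate_neg h).injective

theorem image_tessTranslate_eq_preimage (h : V ℓ) (s : Set (Tess ℓ)) :
    tessTranslate ℓ h '' s = tessTranslate ℓ (-h) ⁻¹' s := by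
  have hright := leftInverse_tessTranslate_neg (-h)
  rw [neg_neg] at hright
  exact congrFun (image_eq_preimage_of_inverse (leftInverse_tessTranslate_neg h) hright) s

theorem MeasurableSet.image_tessTranslate {A B : Set (V ℓ)} {s : Set (Tess ℓ)}
    (hs : MeasurableSet[tessSigma ℓ A] s) {h : V ℓ} (hAB : (· + h) '' A ⊆ B) :
    MeasurableSet[tessSigma ℓ B] (tessTranslate ℓ h '' s) := by
  rw [image_tessTranslate_eq_preimage]
  refine @measurable_generateFrom _ _ (tessSigma ℓ B) _ _ ?_ _ hs
  rintro _ ⟨C, hC, hCA, rfl⟩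
  have hpre : tessTranslate ℓ (-h) ⁻¹' {F | F.1 ∩ C = ∅} = {F | F.1 ∩ ((· + h) '' C) = ∅} := by
    ext F
    show ((· + -h) '' F.1) ∩ C = ∅ ↔ F.1 ∩ ((· + h) '' C) = ∅
    rw [← image_inter_preimage, image_eq_empty, image_add_right]
  rw [hpre]
  exact MeasurableSpace.measurableSet_generateFrom
    ⟨_, hC.image (continuous_add_const h), (image_mono hCA).trans hAB, rfl⟩

theorem cube_mono : Monotone (cube ℓ) := fun _ _ h _ hx i => (hx i).trans (Nat.cast_le.2 h)

theorem norm_le_of_mem_cube {k : ℕ} {x : V ℓ} (hx : x ∈ cube ℓ k) : ‖x‖ ≤ √ℓ * k := by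
  rw [EuclideanSpace.norm_eq, ← Real.sqrt_sq (Nat.cast_nonneg k),
    ← Real.sqrt_mul (Nat.cast_nonneg ℓ)]
  refine Real.sqrt_le_sqrt ?_
  calc ∑ i, ‖x i‖ ^ 2 ≤ ∑ _i : Fin ℓ, (k : ℝ) ^ 2 := Finset.sum_le_sum fun i _ => by
        rw [Real.norm_eq_abs]
        exact pow_le_pow_left₀ (abs_nonneg _) (hx i) 2
    _ = ℓ * k ^ 2 := by simp

theorem IsCompact.exists_subset_cube_s7 {C : Set (V ℓ)} (hC : IsCompact C) :
    ∃ k, C ⊆ cube ℓ k := by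
  obtain ⟨r, hr⟩ := isBounded_iff_forall_norm_le.1 hC.isBounded
  exact ⟨⌈r⌉₊, fun x hx i => (Real.norm_eq_abs (x i) ▸ PiLp.norm_apply_le x i).trans
    ((hr x hx).trans (Nat.le_ceil r))⟩

theorem image_add_cube_subset_compl_cube {k n : ℕ} {h : V ℓ} (hh : √ℓ * (k + n) < ‖h‖) :
    (· + h) '' cube ℓ k ⊆ (cube ℓ n)ᶜ := by
  rintro _ ⟨x, hx, rfl⟩ hxh
  have := norm_sub_le (x + h) x
  rw [add_sub_cancel_left] at this
  nlinarith [norm_le_of_mem_cube hx, norm_le_of_mem_cube hxh]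

theorem iSup_tessSigma_cube : ⨆ k, tessSigma ℓ (cube ℓ k) = tessSigma ℓ univ := by
  refine le_antisymm (iSup_le fun k => tessSigma_mono_s7 (subset_univ _)) ?_
  refine MeasurableSpace.generateFrom_le ?_
  rintro _ ⟨C, hC, -, rfl⟩
  obtain ⟨k, hk⟩ := hC.exists_subset_cube_s7
  exact le_iSup (fun k => tessSigma ℓ (cube ℓ k)) k _
    (MeasurableSpace.measurableSet_generateFrom ⟨C, hC, hk, rfl⟩)

end Tessellation

/-- If the tail σ-algebra is `P`-trivial for a translation invariant
probability measure `P`, then the action of translations is mixing: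
`P(D ∩ (E + h)) → P(D)·P(E)` as `|h| → ∞`. -/
theorem trivial_tail_implies_mixing (ℓ : ℕ) (P : Measure (Tess ℓ)) [IsProbabilityMeasure P]
    (hTI : ∀ E : Set (Tess ℓ), MeasurableSet E → ∀ h : V ℓ,
      P (tessTranslate ℓ h '' E) = P E)
    (htail : ∀ D : Set (Tess ℓ), MeasurableSet[tailSigma ℓ] D → P D = 0 ∨ P D = 1)
    (D E : Set (Tess ℓ)) (hD : MeasurableSet D) (hE : MeasurableSet E) :
    ∀ ε : ℝ, 0 < ε → ∃ R : ℝ, ∀ h : V ℓ, R ≤ ‖h‖ →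
      |(P (D ∩ tessTranslate ℓ h '' E)).toReal - (P D).toReal * (P E).toReal| < ε := by
  intro ε hε
  obtain ⟨k, E', hE'k, hEE'⟩ := exists_measurableSet_measureReal_symmDiff_lt (μ := P)
    (fun _ _ hij => tessSigma_mono_s7 (cube_mono hij)) iSup_tessSigma_cube.symm hE
    (by positivity : 0 < ε / 3)
  obtain ⟨n, hn⟩ := exists_forall_abs_measureReal_inter_sub_mul_le (μ := P)
    (m := fun n => tessSigma ℓ (cube ℓ (n + 1))ᶜ) (fun _ => tessSigma_mono_s7 (subset_univ _))
    (fun _ _ hij => tessSigma_mono_s7 (compl_subset_compl.2 (cube_mono (by omega)))) htail hD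
    (by positivity : 0 < ε / 3)
  refine ⟨√ℓ * (k + (n + 1)) + 1, fun h hh => ?_⟩
  have hE' : MeasurableSet E' := tessSigma_mono_s7 (subset_univ _) _ hE'k
  have hE'h := hE'k.image_tessTranslate (image_add_cube_subset_compl_cube (n := n + 1)
    (by push_cast; linarith))
  have hPreal (s : Set (Tess ℓ)) (hs : MeasurableSet s) :
      P.real (tessTranslate ℓ h '' s) = P.real s :=
    congrArg ENNReal.toReal (hTI s hs h)
  have key := abs_measureReal_inter_sub_mul_le (μ := P) hD
    (hE.image_tessTranslate (h := h) (subset_univ _))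
    (hE'.image_tessTranslate (h := h) (subset_univ _))
  rw [← Set.image_symmDiff (tessTranslate_injective h), hPreal _ (hE.symmDiff hE'),
    hPreal E hE] at key
  change |P.real (D ∩ _) - P.real D * P.real E| < ε
  linarith [hn _ hE'h]
end
end

section
/- Let (Ω, F, P) be a probability space, let Γ, Θ, Υ ∈ F be events with P(Υ) > 1 − ε and P(Υ) > 0 for some ε > 0, and suppose |P(Γ ∩ Θ | Υ) − P(Γ | Υ)·P(Θ | Υ)| < 2ε. Then |P(Γ ∩ Θ) − P(Γ)·P(Θ)| < 4ε. -/
open MeasureTheory Set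

noncomputable section

/-- Conditional probability `P(A | B) = P(A ∩ B) / P(B)`, as a real number. -/
def condProb {Ω : Type*} [MeasurableSpace Ω] (P : Measure Ω) (A B : Set Ω) : ℝ :=
  (P (A ∩ B)).toReal / (P B).toReal

private lemma arith_aux (u du p q r s t w ε : ℝ)
    (hε : 0 < ε) (hΥpos : 0 < u) (hcompl : u + du = 1) (hdulε : du < ε) (hdu0 : 0 ≤ du)
    (hp0 : 0 ≤ p) (hp1 : p ≤ 1) (hq0 : 0 ≤ q) (hq1 : q ≤ 1) (hr0 : 0 ≤ r) (hr1 : r ≤ 1)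
    (hs0 : 0 ≤ s) (hs' : s ≤ du) (ht0 : 0 ≤ t) (ht' : t ≤ du) (hw0 : 0 ≤ w) (hw' : w ≤ du)
    (hc1 : -(2 * ε) < p - q * r) (hc2 : p - q * r < 2 * ε) :
    |(p * u + s) - (q * u + t) * (r * u + w)| < 4 * ε := by
  have hdu' : du = 1 - u := by linarith
  subst hdu'
  have hule : u ≤ 1 := by linarith
  have hu2 : (0:ℝ) ≤ 1 - u ^ 2 := by nlinarith
  rw [abs_lt]
  constructor
  · nlinarith [mul_nonneg (by linarith : (0:ℝ) ≤ 2*ε - (q*r - p)) (sq_nonneg u),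
      mul_nonneg hε.le hu2,
      mul_nonneg (mul_nonneg (by linarith : (0:ℝ) ≤ 1 - q) hΥpos.le) hw0,
      mul_nonneg (mul_nonneg (by linarith : (0:ℝ) ≤ 1 - r) hΥpos.le) ht0,
      mul_nonneg (by linarith : (0:ℝ) ≤ 1 - u - t) hw0,
      mul_nonneg (by linarith : (0:ℝ) ≤ 1 - u - w) hdu0,
      mul_nonneg (by linarith : (0:ℝ) ≤ 1 - u - w) hΥpos.le,
      mul_nonneg (by linarith : (0:ℝ) ≤ 1 - u - t) hΥpos.le,
      mul_nonneg (mul_nonneg hp0 hΥpos.le) hdu0,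
      mul_nonneg hdu0 hdu0]
  · nlinarith [mul_nonneg (by linarith : (0:ℝ) ≤ 2*ε - (p - q*r)) (sq_nonneg u),
      mul_nonneg hε.le hu2,
      mul_nonneg (mul_nonneg hq0 hΥpos.le) hw0,
      mul_nonneg (mul_nonneg hr0 hΥpos.le) ht0,
      mul_nonneg ht0 hw0,
      mul_nonneg (mul_nonneg (by linarith : (0:ℝ) ≤ 1 - p) hΥpos.le) hdu0,
      mul_nonneg hdu0 hdu0]

/-- the estimate in Proposition 7 of the paper. If `P(Υ) > 1 − ε`,
`P(Υ) > 0` and `|P(Γ ∩ Θ | Υ) − P(Γ | Υ)·P(Θ | Υ)| < 2ε`, then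
`|P(Γ ∩ Θ) − P(Γ)·P(Θ)| < 4ε`. -/
theorem approx_indep_from_conditional {Ω : Type*} [MeasurableSpace Ω]
    (P : Measure Ω) [IsProbabilityMeasure P]
    (Γ Θ Υ : Set Ω) (hΓ : MeasurableSet Γ) (hΘ : MeasurableSet Θ) (hΥ : MeasurableSet Υ)
    (ε : ℝ) (hε : 0 < ε)
    (hΥbig : 1 - ε < (P Υ).toReal) (hΥpos : 0 < (P Υ).toReal)
    (hcond : |condProb P (Γ ∩ Θ) Υ - condProb P Γ Υ * condProb P Θ Υ| < 2 * ε) :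
    |(P (Γ ∩ Θ)).toReal - (P Γ).toReal * (P Θ).toReal| < 4 * ε := by
  have hune : (P Υ).toReal ≠ 0 := ne_of_gt hΥpos
  have key : ∀ X : Set Ω,
      (P X).toReal = condProb P X Υ * (P Υ).toReal + (P (X \ Υ)).toReal := by
    intro X
    have h : P (X ∩ Υ) + P (X \ Υ) = P X := measure_inter_add_diff X hΥ
    have h2 : (P X).toReal = (P (X ∩ Υ)).toReal + (P (X \ Υ)).toReal := by
      rw [← h, ENNReal.toReal_add (measure_ne_top P _) (measure_ne_top P _)]
    rw [h2, condProb, div_mul_cancel₀ _ hune]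
  have cp_nonneg : ∀ X : Set Ω, 0 ≤ condProb P X Υ := fun X =>
    div_nonneg ENNReal.toReal_nonneg ENNReal.toReal_nonneg
  have cp_le_one : ∀ X : Set Ω, condProb P X Υ ≤ 1 := by
    intro X
    rw [condProb, div_le_one hΥpos]
    exact ENNReal.toReal_mono (measure_ne_top P _) (measure_mono inter_subset_right)
  have diff_le : ∀ X : Set Ω, (P (X \ Υ)).toReal ≤ (P Υᶜ).toReal := fun X =>
    ENNReal.toReal_mono (measure_ne_top P _) (measure_mono (diff_subset_compl X Υ))
  have hcompl : (P Υ).toReal + (P Υᶜ).toReal = 1 := by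
    have h : P Υ + P Υᶜ = 1 := by
      rw [measure_add_measure_compl hΥ, measure_univ]
    have := congrArg ENNReal.toReal h
    rwa [ENNReal.toReal_add (measure_ne_top P _) (measure_ne_top P _), ENNReal.toReal_one] at this
  rw [abs_lt] at hcond
  rw [key (Γ ∩ Θ), key Γ, key Θ]
  exact arith_aux (P Υ).toReal (P Υᶜ).toReal _ _ _ _ _ _ ε hε hΥpos hcompl
    (by linarith) ENNReal.toReal_nonneg
    (cp_nonneg _) (cp_le_one _) (cp_nonneg _) (cp_le_one _) (cp_nonneg _) (cp_le_one _)
    ENNReal.toReal_nonneg (diff_le _) ENNReal.toReal_nonneg (diff_le _)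
    ENNReal.toReal_nonneg (diff_le _) hcond.1 hcond.2
end
end

section
/- Let W' ⊂ ℝ^ℓ be a compact convex set with 0 in its interior, and let θ be an even probability measure on the unit sphere S^{ℓ−1} whose support spans ℝ^ℓ (i.e. is not contained in any great subsphere). Let h_{W'}(u) = max{⟨u, x⟩ : x ∈ W'} denote the support function of W'. Then there exist unit vectors u_1, …, u_{2ℓ} ∈ S^{ℓ−1} and pairwise disjoint Borel sets U_1, …, U_{2ℓ} ⊆ S^{ℓ−1} with θ(U_a) > 0 for all a, such that the set W = ⋂_{a=1}^{2ℓ} {x ∈ ℝ^ℓ : ⟨u_a, x⟩ ≤ h_{W'}(u_a) + 3} is compact, W' is contained in the interior of W, and for every a ∈ {1,…,2ℓ}, every u ∈ U_a and every d ∈ ℝ with h_{W'}(u_a) + 1 < d < h_{W'}(u_a) + 2, the hyperplane {x : ⟨u, x⟩ = d} strictly separates W' from the facet f_a = W ∩ {x : ⟨u_a, x⟩ = h_{W'}(u_a) + 3}, i.e. W' ⊆ {x : ⟨u, x⟩ < d} and f_a ⊆ {x : ⟨u, x⟩ > d}. -/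
open MeasureTheory Set

noncomputable section

/-- The support of a measure: the smallest closed set of full measure, described as the set of
points all of whose neighbourhoods have positive measure. -/
def msupport {α : Type*} [TopologicalSpace α] [MeasurableSpace α] (θ : Measure α) : Set α :=
  {x | ∀ U ∈ nhds x, θ U ≠ 0}

/-- The support function `h_{W'}(u) = max{⟨u, x⟩ : x ∈ W'}` of a set `W' ⊆ ℝ^ℓ`. -/
def suppFn (ℓ : ℕ) (W' : Set (V ℓ)) (u : V ℓ) : ℝ :=
  sSup ((fun x => (inner ℝ u x : ℝ)) '' W')

/-!
Choose a basis `e₁, …, e_ℓ` of `ℝ^ℓ` inside the support of `θ`. By evenness the `2ℓ` distinct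
vectors `±eᵢ` also lie in the support; they are the `u_a`. The window `W` bounds every coordinate
`⟨eᵢ, x⟩` from both sides, so it is compact, and it contains `W'` with slack `3` in every
direction. Let `U_a` be the trace on the sphere of a ball of radius `ε` around `u_a`: it has
positive measure because `u_a` is in the support, and once `ε‖x‖ ≤ 1` on `W ⊇ W'`, replacing
the normal `u_a` by any `u ∈ U_a` moves `⟨·, x⟩` by at most `1` on `W`, which fits in the gaps
between the levels `h + 1`, `h + 2` and `h + 3`.
-/

open Filter Topology Metric Function
open scoped RealInnerProductSpace

section Support

variable {α : Type*} [TopologicalSpace α] [MeasurableSpace α] {θ : Measure α}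

lemma msupport_subset_of_measure_compl_eq_zero {s : Set α} (hs : IsClosed s) (h : θ sᶜ = 0) :
    msupport θ ⊆ s :=
  fun _ hx => by_contra fun hxs => hx _ (hs.isOpen_compl.mem_nhds hxs) h

lemma measure_inter_pos_of_mem_msupport {x : α} (hx : x ∈ msupport θ) {N s : Set α}
    (hN : N ∈ 𝓝 x) (h : θ sᶜ = 0) : 0 < θ (N ∩ s) := by
  rw [measure_inter_conull h]
  exact pos_iff_ne_zero.2 (hx N hN)

lemma neg_mem_msupport [InvolutiveNeg α] [ContinuousNeg α] [OpensMeasurableSpace α]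
    (heven : ∀ A : Set α, MeasurableSet A → θ (Neg.neg ⁻¹' A) = θ A) {x : α}
    (hx : x ∈ msupport θ) : -x ∈ msupport θ := by
  intro N hN
  obtain ⟨O, hON, hO, hxO⟩ := mem_nhds_iff.mp hN
  have hO' : θ (Neg.neg ⁻¹' O) ≠ 0 :=
    hx _ ((hO.preimage continuous_neg).mem_nhds (by simpa using hxO))
  rw [heven O hO.measurableSet] at hO'
  exact fun hN0 => hO' (measure_mono_null hON hN0)

end Support

section Basis

variable {K W ι : Type*} [DivisionRing K] [AddCommGroup W] [Module K W]

lemma exists_basis_range_subset_of_span_eq_top (b : Module.Basis ι K W) {s : Set W}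
    (hs : Submodule.span K s = ⊤) : ∃ B : Module.Basis ι K W, range B ⊆ s :=
  let B := Module.Basis.ofSpan hs.ge
  ⟨B.reindex (B.indexEquiv b), by
    rw [Module.Basis.range_reindex]; exact Module.Basis.ofSpan_subset _⟩

lemma Module.Basis.injective_sumElim_neg [CharZero K] (B : Module.Basis ι K W) :
    Function.Injective (Sum.elim B (-⇑B)) := by
  refine B.injective.sumElim (neg_injective.comp B.injective) fun i j hij => ?_
  have := congrArg (fun v => B.repr v i) hij
  by_cases h : j = i
  · subst h; norm_num at this
  · simp [h] at this

end Basis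

section Halfspaces

variable {E : Type*} [NormedAddCommGroup E] [InnerProductSpace ℝ E]

lemma isCompact_setOf_inner_mem_Icc [FiniteDimensional ℝ E] {ι : Type*}
    (B : Module.Basis ι ℝ E) (lo hi : ι → ℝ) :
    IsCompact {x : E | ∀ i, ⟪B i, x⟫ ∈ Icc (lo i) (hi i)} := by
  let T : E →ₗ[ℝ] ι → ℝ := LinearMap.pi fun i => innerₛₗ ℝ (B i)
  have hT : LinearMap.ker T = ⊥ :=
    LinearMap.ker_eq_bot.2 fun x y h =>
      InnerProductSpace.ext_inner_left_basis B fun i => congrFun h i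
  simpa [T, Set.preimage, Set.pi] using
    (LinearMap.isClosedEmbedding_of_injective hT).isCompact_preimage
      (isCompact_univ_pi fun i => isCompact_Icc (a := lo i) (b := hi i))

lemma isCompact_iInter_setOf_inner_le [FiniteDimensional ℝ E] {ι κ : Type*}
    (B : Module.Basis ι ℝ E) {u : κ → E} (hpos : ∀ i, B i ∈ range u)
    (hneg : ∀ i, -B i ∈ range u) (c : κ → ℝ) :
    IsCompact (⋂ a, {x : E | ⟪u a, x⟫ ≤ c a}) := by
  choose p hp using hpos
  choose q hq using hneg
  refine (isCompact_setOf_inner_mem_Icc B (fun i => -c (q i)) (fun i => c (p i))).of_isClosed_subset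
    (isClosed_iInter fun a => isClosed_le (by fun_prop) continuous_const) fun x hx i => ?_
  simp only [mem_iInter, mem_ofPred_eq] at hx
  have hlo := hx (q i)
  rw [hq, inner_neg_left] at hlo
  exact ⟨by linarith, hp i ▸ hx (p i)⟩

lemma subset_interior_iInter_setOf_inner_le {κ : Type*} [Finite κ] {u : κ → E} {c : κ → ℝ}
    {S : Set E} (h : ∀ a, ∀ x ∈ S, ⟪u a, x⟫ < c a) :
    S ⊆ interior (⋂ a, {x : E | ⟪u a, x⟫ ≤ c a}) := by
  refine fun x hx =>
    interior_mono (iInter_mono fun a => ofPred_subset_ofPred.2 fun _ => le_of_lt) ?_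
  rw [(isOpen_iInter_of_finite fun a => isOpen_lt (by fun_prop) continuous_const).interior_eq]
  exact mem_iInter.2 fun a => h a x hx

lemma abs_inner_sub_inner_le_dist_mul_norm (u v x : E) :
    |⟪v, x⟫ - ⟪u, x⟫| ≤ dist v u * ‖x‖ := by
  rw [← inner_sub_left, dist_eq_norm]
  exact abs_real_inner_le_norm _ _

end Halfspaces

lemma eventually_pairwise_disjoint_ball {X ι : Type*} [MetricSpace X] [Finite ι] {u : ι → X}
    (hu : Function.Injective u) :
    ∀ᶠ ε in 𝓝 (0 : ℝ), Pairwise (Disjoint on fun a => ball (u a) ε) := by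
  have h : ∀ a b, ∀ᶠ ε in 𝓝 (0 : ℝ), a ≠ b → Disjoint (ball (u a) ε) (ball (u b) ε) := by
    intro a b
    by_cases hab : a = b
    · exact Eventually.of_forall fun _ h => (h hab).elim
    · filter_upwards [eventually_lt_nhds (half_pos (dist_pos.2 (hu.ne hab)))] with ε hε _
      exact ball_disjoint_ball (by linarith)
  exact (eventually_all.2 fun a => eventually_all.2 (h a)).mono fun ε hε a b => hε a b

section Directions

variable {E : Type*} [NormedAddCommGroup E] [InnerProductSpace ℝ E] [FiniteDimensional ℝ E]
  [MeasurableSpace E] [BorelSpace E] {θ : Measure E}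

lemma exists_injective_mem_msupport_isCompact_iInter {n : ℕ} (hn : Module.finrank ℝ E = n)
    (heven : ∀ A : Set E, MeasurableSet A → θ (Neg.neg ⁻¹' A) = θ A)
    (hspan : Submodule.span ℝ (msupport θ) = ⊤) :
    ∃ u : Fin (2 * n) → E, Function.Injective u ∧ (∀ a, u a ∈ msupport θ) ∧
      ∀ c : Fin (2 * n) → ℝ, IsCompact (⋂ a, {x : E | ⟪u a, x⟫ ≤ c a}) := by
  obtain ⟨B, hB⟩ :=
    exists_basis_range_subset_of_span_eq_top (Module.finBasisOfFinrankEq ℝ E hn) hspan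
  let σ : Fin (2 * n) ≃ Fin n ⊕ Fin n := (finCongr (two_mul n)).trans finSumFinEquiv.symm
  have hsupp : ∀ p, Sum.elim B (-⇑B) p ∈ msupport θ := by
    rintro (i | i)
    exacts [hB ⟨i, rfl⟩, neg_mem_msupport heven (hB ⟨i, rfl⟩)]
  refine ⟨Sum.elim B (-⇑B) ∘ σ, B.injective_sumElim_neg.comp σ.injective,
    fun a => hsupp (σ a), isCompact_iInter_setOf_inner_le B (fun i => ⟨σ.symm (.inl i), by simp⟩)
      (fun i => ⟨σ.symm (.inr i), by simp⟩)⟩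

end Directions

lemma inner_le_suppFn {ℓ : ℕ} {W' : Set (V ℓ)} (hW' : IsCompact W') (u : V ℓ) {x : V ℓ}
    (hx : x ∈ W') : ⟪u, x⟫ ≤ suppFn ℓ W' u :=
  le_csSup (hW'.image (by fun_prop)).bddAbove (mem_image_of_mem _ hx)

theorem exists_good_window_general (ℓ : ℕ) (W' : Set (V ℓ))
    (hW'cpt : IsCompact W')
    (θ : Measure (V ℓ)) [IsProbabilityMeasure θ]
    (hsphere : θ (Metric.sphere (0 : V ℓ) 1) = 1)
    (heven : ∀ A : Set (V ℓ), MeasurableSet A → θ (Neg.neg ⁻¹' A) = θ A)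
    (hspan : Submodule.span ℝ (msupport θ) = ⊤) :
    ∃ (u : Fin (2 * ℓ) → V ℓ) (U : Fin (2 * ℓ) → Set (V ℓ)),
      (∀ a, ‖u a‖ = 1) ∧
      (∀ a, MeasurableSet (U a) ∧ U a ⊆ Metric.sphere (0 : V ℓ) 1 ∧ 0 < θ (U a)) ∧
      Pairwise (Function.onFun Disjoint U) ∧
      IsCompact (⋂ a, {x : V ℓ | inner ℝ (u a) x ≤ suppFn ℓ W' (u a) + 3}) ∧
      W' ⊆ interior (⋂ a, {x : V ℓ | inner ℝ (u a) x ≤ suppFn ℓ W' (u a) + 3}) ∧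
      (∀ a, ∀ v ∈ U a, ∀ d : ℝ,
        suppFn ℓ W' (u a) + 1 < d → d < suppFn ℓ W' (u a) + 2 →
        (∀ x ∈ W', (inner ℝ v x : ℝ) < d) ∧
        (∀ x ∈ (⋂ b, {x : V ℓ | inner ℝ (u b) x ≤ suppFn ℓ W' (u b) + 3}) ∩
            {x : V ℓ | (inner ℝ (u a) x : ℝ) = suppFn ℓ W' (u a) + 3},
          d < (inner ℝ v x : ℝ))) := by
  have hnull : θ (sphere (0 : V ℓ) 1)ᶜ = 0 :=
    (prob_compl_eq_zero_iff isClosed_sphere.measurableSet).2 hsphere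
  obtain ⟨u, hu_inj, hu_supp, hu_cpt⟩ :=
    exists_injective_mem_msupport_isCompact_iInter finrank_euclideanSpace_fin heven hspan
  have hu_norm : ∀ a, ‖u a‖ = 1 := fun a => mem_sphere_zero_iff_norm.1
    (msupport_subset_of_measure_compl_eq_zero isClosed_sphere hnull (hu_supp a))
  set W := ⋂ a, {x : V ℓ | inner ℝ (u a) x ≤ suppFn ℓ W' (u a) + 3}
  have hW'W : W' ⊆ interior W := subset_interior_iInter_setOf_inner_le fun a x hx => by
    linarith [inner_le_suppFn hW'cpt (u a) hx]
  obtain ⟨R, hR⟩ := (hu_cpt _).isBounded.exists_norm_le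
  have hsmall : ∀ᶠ ε in 𝓝 (0 : ℝ), ε * R < 1 :=
    (continuous_mul_const R).tendsto' 0 0 (zero_mul R) |>.eventually_lt_const one_pos
  obtain ⟨ε, ⟨hdisj, hεR⟩, hε⟩ := (((eventually_pairwise_disjoint_ball hu_inj).and hsmall)
    |>.filter_mono nhdsWithin_le_nhds |>.and (self_mem_nhdsWithin (s := Ioi 0))).exists
  have hclose : ∀ a, ∀ v ∈ ball (u a) ε, ∀ x ∈ W, |⟪v, x⟫ - ⟪u a, x⟫| ≤ 1 := fun a v hv x hx =>
    calc |⟪v, x⟫ - ⟪u a, x⟫| ≤ dist v (u a) * ‖x‖ := abs_inner_sub_inner_le_dist_mul_norm _ _ _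
      _ ≤ ε * R := mul_le_mul (mem_ball.1 hv).le (hR x hx) (norm_nonneg x) hε.le
      _ ≤ 1 := hεR.le
  refine ⟨u, fun a => ball (u a) ε ∩ sphere 0 1, hu_norm,
    fun a => ⟨measurableSet_ball.inter isClosed_sphere.measurableSet, inter_subset_right,
      measure_inter_pos_of_mem_msupport (hu_supp a) (ball_mem_nhds _ hε) hnull⟩,
    fun a b hab => (hdisj hab).mono inter_subset_left inter_subset_left, hu_cpt _, hW'W,
    fun a v hv d hd1 hd2 => ⟨fun x hx => ?_, fun x hx => ?_⟩⟩
  · have := abs_le.1 (hclose a v hv.1 x (interior_subset (hW'W hx)))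
    linarith [inner_le_suppFn hW'cpt (u a) hx]
  · have := abs_le.1 (hclose a v hv.1 x hx.1)
    linarith [hx.2.out]

/-- Lemma 3 of the paper. Given a compact convex `W'` with `0 ∈ Int W'`
and an even probability measure `θ` on the sphere whose support spans `ℝ^ℓ`, there are unit
vectors `u_1, …, u_{2ℓ}` and pairwise disjoint Borel sets `U_a ⊆ S^{ℓ−1}` of positive
`θ`-measure such that `W = ⋂_a {x : ⟨u_a, x⟩ ≤ h_{W'}(u_a) + 3}` is compact, contains `W'` in
its interior, and every hyperplane `{x : ⟨u, x⟩ = d}` with `u ∈ U_a` and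
`h_{W'}(u_a) + 1 < d < h_{W'}(u_a) + 2` strictly separates `W'` from the facet
`f_a = W ∩ {x : ⟨u_a, x⟩ = h_{W'}(u_a) + 3}`. -/
theorem exists_good_window (ℓ : ℕ) (W' : Set (V ℓ))
    (hW'cpt : IsCompact W') (hW'conv : Convex ℝ W')
    (h0 : (0 : V ℓ) ∈ interior W')
    (θ : Measure (V ℓ)) [IsProbabilityMeasure θ]
    (hsphere : θ (Metric.sphere (0 : V ℓ) 1) = 1)
    (heven : ∀ A : Set (V ℓ), MeasurableSet A → θ (Neg.neg ⁻¹' A) = θ A)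
    (hspan : Submodule.span ℝ (msupport θ) = ⊤) :
    ∃ (u : Fin (2 * ℓ) → V ℓ) (U : Fin (2 * ℓ) → Set (V ℓ)),
      (∀ a, ‖u a‖ = 1) ∧
      (∀ a, MeasurableSet (U a) ∧ U a ⊆ Metric.sphere (0 : V ℓ) 1 ∧ 0 < θ (U a)) ∧
      Pairwise (Function.onFun Disjoint U) ∧
      IsCompact (⋂ a, {x : V ℓ | inner ℝ (u a) x ≤ suppFn ℓ W' (u a) + 3}) ∧
      W' ⊆ interior (⋂ a, {x : V ℓ | inner ℝ (u a) x ≤ suppFn ℓ W' (u a) + 3}) ∧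
      (∀ a, ∀ v ∈ U a, ∀ d : ℝ,
        suppFn ℓ W' (u a) + 1 < d → d < suppFn ℓ W' (u a) + 2 →
        (∀ x ∈ W', (inner ℝ v x : ℝ) < d) ∧
        (∀ x ∈ (⋂ b, {x : V ℓ | inner ℝ (u b) x ≤ suppFn ℓ W' (u b) + 3}) ∩
            {x : V ℓ | (inner ℝ (u a) x : ℝ) = suppFn ℓ W' (u a) + 3},
          d < (inner ℝ v x : ℝ))) :=
  exists_good_window_general ℓ W' hW'cpt θ hsphere heven hspan
end
end
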